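/- arXiv:2205.15915 — 4 statements merged into one kernel-verified Lean document; each statement's English description precedes it below -/
import Mathlib

section
/- If a path kind P refines a path kind P' (P ⪯_P P'), then every path π in an information flow diagram I that has kind P also has kind P'. -/
set_option autoImplicit true

section IFCIL

variable {N O S A Pr : Type}

/-- Node patterns: a concrete node or the wildcard `*`. -/
inductive NodePat (N : Type) where
  | star : NodePat N
  | node : N → NodePat N

/-- An arc of an information flow diagram: source, nonempty set of operations, target. -/
abbrev Arc (N O : Type) := N × Set O × N

/-- An information flow diagram `I = (N, ta, E)`. -/
structure IFD (N O : Type) where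
  ta : N → Set N
  E : Set (Arc N O)

/-- A node pattern `m` matches a node `n`: `m = *` or `n ∈ ta(m)`. -/
def NodePat.mat (I : IFD N O) : NodePat N → N → Prop
  | .star, _ => True
  | .node m, n => n ∈ I.ta m

/-- Consecutive arcs have matching endpoints. -/
def Chained : List (Arc N O) → Prop
  | [] => True
  | [_] => True
  | a :: b :: rest => a.2.2 = b.1 ∧ Chained (b :: rest)

/-- A path in `I`: nonempty, chained sequence of arcs of `I`. -/
def PathIn (I : IFD N O) (π : List (Arc N O)) : Prop :=
  π ≠ [] ∧ Chained π ∧ ∀ a ∈ π, a ∈ I.E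

/-- Arrows: single step `>` or multi step `+>`. -/
inductive Arrow where
  | single : Arrow
  | multi : Arrow

/-- Path kinds `P ::= n [o]> n' | n +[o]> n' | P₁ P₂`. -/
inductive Kind (N O : Type) where
  | atom : NodePat N → Arrow → Set O → NodePat N → Kind N O
  | comp : Kind N O → Kind N O → Kind N O

/-- The kind satisfaction relation `π ▷_I P`. -/
inductive KSat (I : IFD N O) : List (Arc N O) → Kind N O → Prop where
  | step : NodePat.mat I m n → NodePat.mat I m' n' → (o ∩ o').Nonempty →
      KSat I [(n, o, n')] (.atom m .single o' m')
  | plusBase : KSat I [(n, o, n')] (.atom m .single o' m') →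
      KSat I [(n, o, n')] (.atom m .multi o' m')
  | plusStep : KSat I [(n, o, n')] (.atom m .single o' .star) →
      KSat I π (.atom .star .multi o' m') →
      KSat I ((n, o, n') :: π) (.atom m .multi o' m')
  | comp : KSat I π₁ P₁ → KSat I π₂ P₂ → KSat I (π₁ ++ π₂) (.comp P₁ P₂)

/-- Node refinement: `n ⪯_n n` and `n ⪯_n *`. -/
def NRef : NodePat N → NodePat N → Prop := fun a b => a = b ∨ b = .star

/-- Arrow refinement: reflexivity and `> ⪯_a +>`. -/
inductive ARef : Arrow → Arrow → Prop where
  | refl (a) : ARef a a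
  | up : ARef .single .multi

/-- Kind refinement `⪯_P`: rules (comp), (P-1)–(P-4), closed under reflexivity
and transitivity. -/
inductive KRef : Kind N O → Kind N O → Prop where
  | refl (P) : KRef P P
  | trans : KRef P Q → KRef Q R → KRef P R
  | comp : KRef P₁ P₁' → KRef P₂ P₂' → KRef (.comp P₁ P₂) (.comp P₁' P₂')
  | atom : NRef n₁ n₁' → NRef n₂ n₂' → ARef w w' → o ⊆ o' →
      KRef (.atom n₁ w o n₂) (.atom n₁' w' o' n₂')
  | p2 : NRef n₁ n₁' → NRef n₂ n₂' → o₁ ⊆ o₁' → o₁ ⊆ o₂' → o₂ ⊆ o₂' →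
      KRef (.comp (.atom n₁ .multi o₁ .star) (.atom .star .single o₂ n₂))
           (.comp (.atom n₁' .single o₁' .star) (.atom .star .multi o₂' n₂'))
  | p3 : NRef n₁ n₁' → NRef n₂ n₂' → o₁ ⊆ o' → o₂ ⊆ o' →
      KRef (.comp (.atom n₁ .multi o₁ .star) (.atom .star .multi o₂ n₂))
           (.atom n₁' .multi o' n₂')
  | p4 : NRef n₁ n₁' → NRef n₂ n₂' → o₁ ⊆ o₁' → o₂ ⊆ o₂' → o₂ ⊆ o₁' →
      KRef (.comp (.atom n₁ .single o₁ .star) (.atom .star .multi o₂ n₂))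
           (.comp (.atom n₁' .multi o₁' .star) (.atom .star .single o₂' n₂'))

/-- IFL requirements `R ::= P | ~P | P : P'`. -/
inductive Req (N O : Type) where
  | ex : Kind N O → Req N O
  | no : Kind N O → Req N O
  | constr : Kind N O → Kind N O → Req N O

/-- Validity `I ⊨ R`. -/
def Valid (I : IFD N O) : Req N O → Prop
  | .ex P => ∃ π, PathIn I π ∧ KSat I π P
  | .no P => ¬ ∃ π, PathIn I π ∧ KSat I π P
  | .constr P P' => ∀ π, PathIn I π → KSat I π P → KSat I π P'

/-- Requirement refinement `⪯`: rules (R-1)–(R-3), closed under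
reflexivity and transitivity. -/
inductive RRef : Req N O → Req N O → Prop where
  | refl (R) : RRef R R
  | trans : RRef R₁ R₂ → RRef R₂ R₃ → RRef R₁ R₃
  | ex : KRef P P' → RRef (.ex P) (.ex P')
  | no : KRef P P' → RRef (.no P') (.no P)
  | constr : KRef P₁ P₁' → KRef P₂ P₂' → RRef (.constr P₁' P₂) (.constr P₁ P₂')

/-- The equivalent, right-linear grammar of kinds:
`P ::= n [o]> n' | n +[o]> n' | (n [o]> n') P | (n +[o]> n') P`. -/
inductive LKind (N O : Type) where
  | step : NodePat N → Set O → NodePat N → LKind N O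
  | plus : NodePat N → Set O → NodePat N → LKind N O
  | stepC : NodePat N → Set O → NodePat N → LKind N O → LKind N O
  | plusC : NodePat N → Set O → NodePat N → LKind N O → LKind N O

/-- Kind satisfaction `π ▷_I P` for the right-linear grammar. -/
inductive LSat (I : IFD N O) : List (Arc N O) → LKind N O → Prop where
  | step : NodePat.mat I m n → NodePat.mat I m' n' → (o ∩ o').Nonempty →
      LSat I [(n, o, n')] (.step m o' m')
  | plusBase : LSat I [(n, o, n')] (.step m o' m') →
      LSat I [(n, o, n')] (.plus m o' m')
  | plusStep : LSat I [(n, o, n')] (.step m o' .star) →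
      LSat I π (.plus .star o' m') →
      LSat I ((n, o, n') :: π) (.plus m o' m')
  | stepC : LSat I [(n, o, n')] (.step m o' .star) → LSat I π P →
      LSat I ((n, o, n') :: π) (.stepC m o' m' P)
  | plusCBase : LSat I π (.stepC m o' m' P) → LSat I π (.plusC m o' m' P)
  | plusCStep : LSat I [(n, o, n')] (.step m o' .star) →
      LSat I π (.plusC .star o' .star P) →
      LSat I ((n, o, n') :: π) (.plusC m o' m' P)

/-- LTL formulas over atomic propositions `Pr` and actions `A`;
`acts o` stands for the disjunction `⋁_{op ∈ o} (op)`. -/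
inductive LTL (Pr A : Type) where
  | tt : LTL Pr A
  | atom : Pr → LTL Pr A
  | acts : Set A → LTL Pr A
  | and : LTL Pr A → LTL Pr A → LTL Pr A
  | or : LTL Pr A → LTL Pr A → LTL Pr A
  | not : LTL Pr A → LTL Pr A
  | next : LTL Pr A → LTL Pr A
  | untl : LTL Pr A → LTL Pr A → LTL Pr A

/-- A finite KTS path: a state followed by a list of (action, state) steps. -/
structure FinPath (S A : Type) where
  first : S
  rest : List (A × S)

/-- Drop the first `k` transitions of a finite path. -/
def FinPath.drop : FinPath S A → ℕ → FinPath S A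
  | w, 0 => w
  | ⟨s, []⟩, _ + 1 => ⟨s, []⟩
  | ⟨_, (_, s') :: r⟩, k + 1 => FinPath.drop ⟨s', r⟩ k

/-- Finite-path LTL semantics `w ⊨_l φ` with labeling `L`. -/
def FSat (L : S → Set Pr) : LTL Pr A → FinPath S A → Prop
  | .tt, _ => True
  | .atom p, w => p ∈ L w.first
  | .acts o, w => ∃ a s r, w.rest = (a, s) :: r ∧ a ∈ o
  | .and φ ψ, w => FSat L φ w ∧ FSat L ψ w
  | .or φ ψ, w => FSat L φ w ∨ FSat L ψ w
  | .not φ, w => ¬ FSat L φ w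
  | .next φ, w => ∃ a s r, w.rest = (a, s) :: r ∧ FSat L φ ⟨s, r⟩
  | .untl φ ψ, w => ∃ k, k ≤ w.rest.length ∧ FSat L ψ (w.drop k) ∧
      ∀ j < k, FSat L φ (w.drop j)

/-- The LTL encoding `enc(P)` of flow kinds (finite-path version,
with end marker `¬X(true)`). -/
def encK : LKind N O → LTL (NodePat N) O
  | .step n o n' =>
      .and (.atom n) (.and (.acts o) (.next (.and (.atom n') (.not (.next .tt)))))
  | .plus n o n' =>
      .and (.atom n) (.and (.acts o)
        (.next (.untl (.acts o) (.and (.atom n') (.not (.next .tt))))))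
  | .stepC n o _ P => .and (.atom n) (.and (.acts o) (.next (encK P)))
  | .plusC n o _ P =>
      .and (.atom n) (.and (.acts o) (.next (.untl (.acts o) (encK P))))

/-- The labeling `Λ` of the KTS of `I`: `M ∈ Λ(n)` iff `n ∈ ta(M)`
(with the wildcard true everywhere). -/
def labelOf (I : IFD N O) : N → Set (NodePat N) :=
  fun n => {p | NodePat.mat I p n}

/-- `encRest π r`: the steps `r` traverse the arcs `π` choosing one
operation from each arc's operation set. -/
def encRest : List (Arc N O) → List (O × N) → Prop
  | [], [] => True
  | (_, o, n') :: π, (op, s) :: r => op ∈ o ∧ s = n' ∧ encRest π r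
  | _, _ => False

/-- `w ∈ enc(π)` : the KTS path `w` results from the diagram path `π`
by choosing one operation from each arc's operation set. -/
def encPath (π : List (Arc N O)) (w : FinPath N O) : Prop :=
  match π with
  | [] => False
  | (n, _, _) :: _ => w.first = n ∧ encRest π w.rest

/-- Auxiliary for `π_w`. -/
def diagOf : N → List (O × N) → List (Arc N O)
  | _, [] => []
  | s, (op, s') :: r => (s, ({op} : Set O), s') :: diagOf s' r

/-- `π_w`: the diagram path obtained from a KTS path by replacing each
action `op` with the singleton `{op}`. -/
def FinPath.toDiagram (w : FinPath N O) : List (Arc N O) := diagOf w.first w.rest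

/-- A transition of the KTS of `I`: `E' = {(n, op, n') | (n,o,n') ∈ E, op ∈ o}`. -/
def ktsStep (I : IFD N O) (s : N) (op : O) (s' : N) : Prop :=
  ∃ o, (s, o, s') ∈ I.E ∧ op ∈ o

def ktsRest (I : IFD N O) : N → List (O × N) → Prop
  | _, [] => True
  | s, (op, s') :: r => ktsStep I s op s' ∧ ktsRest I s' r

/-- `w` is a (finite) path of the KTS of `I`. -/
def KTSPath (I : IFD N O) (w : FinPath N O) : Prop := ktsRest I w.first w.rest

/-- `K ⊨_l φ`: every finite path of the KTS of `I` satisfies `φ`. -/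
def KModels (I : IFD N O) (φ : LTL (NodePat N) O) : Prop :=
  ∀ w, KTSPath I w → FSat (labelOf I) φ w

/-- IFL requirements over right-linear kinds. -/
inductive LReq (N O : Type) where
  | ex : LKind N O → LReq N O
  | no : LKind N O → LReq N O
  | constr : LKind N O → LKind N O → LReq N O

/-- Validity `I ⊨ R` for right-linear requirements. -/
def LValid (I : IFD N O) : LReq N O → Prop
  | .ex P => ∃ π, PathIn I π ∧ LSat I π P
  | .no P => ¬ ∃ π, PathIn I π ∧ LSat I π P
  | .constr P P' => ∀ π, PathIn I π → LSat I π P → LSat I π P'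

/-- Satisfaction `K ⊢ R` in the finite-path KTS semantics. -/
def KEnt (I : IFD N O) : LReq N O → Prop
  | .ex P => ¬ KModels I (.not (encK P))
  | .no P => KModels I (.not (encK P))
  | .constr P P' => KModels I (.or (.not (encK P)) (encK P'))

/-- Infinite KTS paths. -/
structure InfPath (S A : Type) where
  state : ℕ → S
  act : ℕ → A

def InfPath.drop (w : InfPath S A) (k : ℕ) : InfPath S A :=
  ⟨fun i => w.state (i + k), fun i => w.act (i + k)⟩

/-- Infinite-path LTL semantics. -/
def ISat (L : S → Set Pr) : LTL Pr A → InfPath S A → Prop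
  | .tt, _ => True
  | .atom p, w => p ∈ L (w.state 0)
  | .acts o, w => w.act 0 ∈ o
  | .and φ ψ, w => ISat L φ w ∧ ISat L ψ w
  | .or φ ψ, w => ISat L φ w ∨ ISat L ψ w
  | .not φ, w => ¬ ISat L φ w
  | .next φ, w => ISat L φ (w.drop 1)
  | .untl φ ψ, w => ∃ k, ISat L ψ (w.drop k) ∧ ∀ j < k, ISat L φ (w.drop j)

/-- Atomic propositions for the sink-extended KTS: node patterns plus
the distinguished proposition `ι`. -/
abbrev SProp (N : Type) := NodePat N ⊕ Unit

/-- Labeling of the sink-extended KTS: the sink (`none`) is labeled only by `ι`. -/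
def labelι (I : IFD N O) : Option N → Set (SProp N)
  | some n => {p | ∃ q, p = Sum.inl q ∧ NodePat.mat I q n}
  | none => {Sum.inr ()}

/-- The encoding `enc_ι(P)` of flow kinds for the sink-extended KTS:
identical to `enc` except that `¬X(true)` is replaced by `X(ι)`. -/
def encι : LKind N O → LTL (SProp N) O
  | .step n o n' =>
      .and (.atom (.inl n)) (.and (.acts o)
        (.next (.and (.atom (.inl n')) (.next (.atom (.inr ()))))))
  | .plus n o n' =>
      .and (.atom (.inl n)) (.and (.acts o)
        (.next (.untl (.acts o) (.and (.atom (.inl n')) (.next (.atom (.inr ())))))))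
  | .stepC n o _ P => .and (.atom (.inl n)) (.and (.acts o) (.next (encι P)))
  | .plusC n o _ P =>
      .and (.atom (.inl n)) (.and (.acts o) (.next (.untl (.acts o) (encι P))))

/-- The states of a finite path. -/
def FinPath.states (w : FinPath S A) : List S := w.first :: w.rest.map Prod.snd

/-- `w·ι^ω`: the finite path `w` followed by the sink forever
(with arbitrary operation labels `ops` into `ι`). -/
def appendSink (w : FinPath N O) (ops : ℕ → O) : InfPath (Option N) O where
  state := fun i => w.states[i]?
  act := fun i => if h : i < w.rest.length then (w.rest.get ⟨i, h⟩).1 else ops i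

/-- Transitions of the sink-extended KTS `K_ι`: the transitions of `K`,
transitions from every state to the sink with every operation, and the
self-loop on the sink. -/
def sinkStep (I : IFD N O) : Option N → O → Option N → Prop
  | some s, op, some s' => ktsStep I s op s'
  | _, _, none => True
  | none, _, some _ => False

/-- `w` is an infinite path of the sink-extended KTS `K_ι`. -/
def KιPath (I : IFD N O) (w : InfPath (Option N) O) : Prop :=
  ∀ i, sinkStep I (w.state i) (w.act i) (w.state (i + 1))

/-- `K_ι ⊨_l φ`: every infinite path of `K_ι` satisfies `φ`. -/
def KιModels (I : IFD N O) (φ : LTL (SProp N) O) : Prop :=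
  ∀ w, KιPath I w → ISat (labelι I) φ w

/-- Satisfaction `K_ι ⊢ R` in the infinite-path, sink-extended semantics. -/
def KιEnt (I : IFD N O) : LReq N O → Prop
  | .ex P => ¬ KιModels I (.not (encι P))
  | .no P => KιModels I (.not (encι P))
  | .constr P P' => KιModels I (.or (.not (encι P)) (encι P'))

/-- The leading node constraint of a kind. -/
def LKind.firstNode : LKind N O → NodePat N
  | .step n _ _ => n
  | .plus n _ _ => n
  | .stepC n _ _ _ => n
  | .plusC n _ _ _ => n

/-- The leading operation set of a kind. -/
def LKind.firstOps : LKind N O → Set O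
  | .step _ o _ => o
  | .plus _ o _ => o
  | .stepC _ o _ _ => o
  | .plusC _ o _ _ => o

end IFCIL

/-!
An atomic kind has a flat description: `π ▷ m +[o]> m'` holds iff `π` is nonempty, every arc
of `π` carries an operation of `o`, the first source is matched by `m` and the last target by
`m'`; `π ▷ m [o]> m'` additionally asks `π` to be a single arc. In these terms rule (P-1) is
monotonicity in the patterns and the operation set, and (P-2)–(P-4) follow by enlarging the
operation sets of the two factors of a composite kind to a common one, gluing the two paths,
and (for (P-2) and (P-4)) cutting the result again one arc further along.
-/

section KindRefinement

variable {N O : Type} {I : IFD N O} {a : Arc N O} {π π₁ π₂ : List (Arc N O)}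
  {m m' n₁ n₁' n₂ n₂' : NodePat N} {o o' o₁ o₁' o₂ o₂' : Set O}

theorem NodePat.mat_of_nRef (h : NRef m m') {n : N} (hm : m.mat I n) : m'.mat I n := by
  rcases h with rfl | rfl
  exacts [hm, trivial]

theorem NRef.refl (m : NodePat N) : NRef m m := Or.inl rfl

/-- The unfolded meaning of `π ▷ m +[o]> m'`. -/
structure Spans (I : IFD N O) (m : NodePat N) (o : Set O) (m' : NodePat N)
    (π : List (Arc N O)) : Prop where
  ne_nil : π ≠ []
  meets : ∀ a ∈ π, (a.2.1 ∩ o).Nonempty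
  head : ∀ a ∈ π.head?, m.mat I a.1
  last : ∀ a ∈ π.getLast?, m'.mat I a.2.2

namespace Spans

theorem mono (h : Spans I m o m' π) (hm : NRef m n₁) (hm' : NRef m' n₂) (ho : o ⊆ o') :
    Spans I n₁ o' n₂ π where
  ne_nil := h.ne_nil
  meets a ha := (h.meets a ha).mono (Set.inter_subset_inter_right _ ho)
  head a ha := NodePat.mat_of_nRef hm (h.head a ha)
  last a ha := NodePat.mat_of_nRef hm' (h.last a ha)

theorem singleton_iff :
    Spans I m o m' [a] ↔ m.mat I a.1 ∧ m'.mat I a.2.2 ∧ (a.2.1 ∩ o).Nonempty := by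
  constructor
  · intro h
    exact ⟨h.head a rfl, h.last a rfl, h.meets a (List.mem_singleton_self a)⟩
  · rintro ⟨hm, hm', ho⟩
    exact ⟨List.cons_ne_nil _ _, by simpa using ho, by simpa using hm, by simpa using hm'⟩

theorem cons (ha : Spans I m o .star [a]) (h : Spans I .star o m' π) :
    Spans I m o m' (a :: π) where
  ne_nil := List.cons_ne_nil _ _
  meets := List.forall_mem_cons.2 ⟨ha.meets a (List.mem_singleton_self a), h.meets⟩
  head := by simpa using ha.head
  last := by simpa [List.getLast?_cons_of_ne_nil h.ne_nil] using h.last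

theorem append (h₁ : Spans I m o .star π₁) (h₂ : Spans I .star o m' π₂) :
    Spans I m o m' (π₁ ++ π₂) where
  ne_nil := by simp [h₁.ne_nil]
  meets := List.forall_mem_append.2 ⟨h₁.meets, h₂.meets⟩
  head := by simpa [List.head?_append_of_ne_nil _ h₁.ne_nil] using h₁.head
  last := by simpa [List.getLast?_append_of_ne_nil _ h₂.ne_nil] using h₂.last

theorem left (h : Spans I m o m' (π₁ ++ π₂)) (h₁ : π₁ ≠ []) : Spans I m o .star π₁ where
  ne_nil := h₁
  meets a ha := h.meets a (List.mem_append_left _ ha)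
  head := by simpa [List.head?_append_of_ne_nil _ h₁] using h.head
  last _ _ := trivial

theorem right (h : Spans I m o m' (π₁ ++ π₂)) (h₂ : π₂ ≠ []) : Spans I .star o m' π₂ where
  ne_nil := h₂
  meets a ha := h.meets a (List.mem_append_right _ ha)
  head _ _ := trivial
  last := by simpa [List.getLast?_append_of_ne_nil _ h₂] using h.last

end Spans

namespace KSat

theorem atom_single_iff :
    KSat I π (.atom m .single o m') ↔ π.length = 1 ∧ Spans I m o m' π := by
  constructor
  · rintro ⟨hm, hm', ho⟩
    exact ⟨rfl, Spans.singleton_iff.2 ⟨hm, hm', ho⟩⟩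
  · rintro ⟨hlen, h⟩
    obtain ⟨⟨n, o₀, n'⟩, rfl⟩ := List.length_eq_one_iff.1 hlen
    obtain ⟨hm, hm', ho⟩ := Spans.singleton_iff.1 h
    exact .step hm hm' ho

theorem atom_multi_iff : KSat I π (.atom m .multi o m') ↔ Spans I m o m' π := by
  constructor
  · intro h
    generalize hP : Kind.atom m .multi o m' = P at h
    induction h generalizing m with
    | step => cases hP
    | plusBase hsingle => cases hP; exact (atom_single_iff.1 hsingle).2
    | plusStep ha _ _ ih => cases hP; exact (atom_single_iff.1 ha).2.cons (ih rfl)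
    | comp => cases hP
  · intro h
    induction π generalizing m with
    | nil => exact absurd rfl h.ne_nil
    | cons a π ih =>
      obtain ⟨n, o₀, n'⟩ := a
      rcases eq_or_ne π [] with rfl | hπ
      · exact .plusBase (atom_single_iff.2 ⟨rfl, h⟩)
      · exact .plusStep (atom_single_iff.2 ⟨rfl, h.left (π₁ := [_]) (List.cons_ne_nil _ _)⟩)
          (ih (h.right (π₁ := [_]) hπ))

theorem atom_mono {w w' : Arrow} (h : KSat I π (.atom n₁ w o n₂)) (h₁ : NRef n₁ n₁')
    (h₂ : NRef n₂ n₂') (hw : ARef w w') (ho : o ⊆ o') : KSat I π (.atom n₁' w' o' n₂') := by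
  cases hw with
  | refl w =>
    cases w
    · obtain ⟨hlen, hs⟩ := atom_single_iff.1 h
      exact atom_single_iff.2 ⟨hlen, hs.mono h₁ h₂ ho⟩
    · exact atom_multi_iff.2 ((atom_multi_iff.1 h).mono h₁ h₂ ho)
  | up => exact atom_multi_iff.2 ((atom_single_iff.1 h).2.mono h₁ h₂ ho)

theorem single_multi_of_multi_single
    (h : KSat I π (.comp (.atom n₁ .multi o₁ .star) (.atom .star .single o₂ n₂)))
    (h₁ : NRef n₁ n₁') (h₂ : NRef n₂ n₂') (ho₁₁ : o₁ ⊆ o₁') (ho₁₂ : o₁ ⊆ o₂') (ho₂ : o₂ ⊆ o₂') :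
    KSat I π (.comp (.atom n₁' .single o₁' .star) (.atom .star .multi o₂' n₂')) := by
  cases h with
  | comp hπ₁ hπ₂ =>
    have hs₁ := atom_multi_iff.1 hπ₁
    obtain ⟨-, hs₂⟩ := atom_single_iff.1 hπ₂
    obtain ⟨a, rest, rfl⟩ := List.exists_cons_of_ne_nil hs₁.ne_nil
    have hs : Spans I n₁ o₂' n₂' (a :: (rest ++ _)) :=
      (hs₁.mono (.refl _) (.refl _) ho₁₂).append (hs₂.mono (.refl _) h₂ ho₂)
    exact .comp (π₁ := [a])
      (atom_single_iff.2
        ⟨rfl, (hs₁.left (π₁ := [a]) (List.cons_ne_nil _ _)).mono h₁ (.refl _) ho₁₁⟩)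
      (atom_multi_iff.2 (hs.right (π₁ := [a])
        (List.append_ne_nil_of_right_ne_nil _ hs₂.ne_nil)))

theorem multi_of_multi_multi
    (h : KSat I π (.comp (.atom n₁ .multi o₁ .star) (.atom .star .multi o₂ n₂)))
    (h₁ : NRef n₁ n₁') (h₂ : NRef n₂ n₂') (ho₁ : o₁ ⊆ o') (ho₂ : o₂ ⊆ o') :
    KSat I π (.atom n₁' .multi o' n₂') := by
  cases h with
  | comp hπ₁ hπ₂ =>
    exact atom_multi_iff.2 (((atom_multi_iff.1 hπ₁).mono h₁ (.refl _) ho₁).append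
      ((atom_multi_iff.1 hπ₂).mono (.refl _) h₂ ho₂))

theorem multi_single_of_single_multi
    (h : KSat I π (.comp (.atom n₁ .single o₁ .star) (.atom .star .multi o₂ n₂)))
    (h₁ : NRef n₁ n₁') (h₂ : NRef n₂ n₂') (ho₁ : o₁ ⊆ o₁') (ho₂ : o₂ ⊆ o₂') (ho₂₁ : o₂ ⊆ o₁') :
    KSat I π (.comp (.atom n₁' .multi o₁' .star) (.atom .star .single o₂' n₂')) := by
  cases h with
  | comp hπ₁ hπ₂ =>
    obtain ⟨-, hs₁⟩ := atom_single_iff.1 hπ₁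
    have hs₂ := atom_multi_iff.1 hπ₂
    obtain ⟨rest, b, rfl⟩ : ∃ rest b, _ = rest ++ [b] :=
      ⟨_, _, (List.dropLast_append_getLast hs₂.ne_nil).symm⟩
    have hs := (hs₁.mono h₁ (.refl _) ho₁).append (hs₂.mono (.refl _) (.refl _) ho₂₁)
    rw [← List.append_assoc] at hs ⊢
    exact .comp
      (atom_multi_iff.2 (hs.left (List.append_ne_nil_of_left_ne_nil hs₁.ne_nil _)))
      (atom_single_iff.2
        ⟨rfl, (hs₂.right (π₁ := rest) (List.cons_ne_nil _ _)).mono (.refl _) h₂ ho₂⟩)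

end KSat

end KindRefinement

theorem kind_refinement_general {N O : Type} (I : IFD N O) (P P' : Kind N O)
    (href : KRef P P') (π : List (Arc N O))
    (hsat : KSat I π P) : KSat I π P' := by
  induction href generalizing π with
  | refl => exact hsat
  | trans _ _ ih₁ ih₂ => exact ih₂ _ (ih₁ _ hsat)
  | comp _ _ ih₁ ih₂ =>
    cases hsat with
    | comp h₁ h₂ => exact .comp (ih₁ _ h₁) (ih₂ _ h₂)
  | atom h₁ h₂ hw ho => exact hsat.atom_mono h₁ h₂ hw ho
  | p2 h₁ h₂ ho₁₁ ho₁₂ ho₂ => exact hsat.single_multi_of_multi_single h₁ h₂ ho₁₁ ho₁₂ ho₂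
  | p3 h₁ h₂ ho₁ ho₂ => exact hsat.multi_of_multi_multi h₁ h₂ ho₁ ho₂
  | p4 h₁ h₂ ho₁ ho₂ ho₂₁ => exact hsat.multi_single_of_single_multi h₁ h₂ ho₁ ho₂ ho₂₁

/-- If a path kind `P` refines a path kind `P'` (`P ⪯_P P'`),
then every path `π` in an information flow diagram `I` that has kind `P`
also has kind `P'`. -/
theorem kind_refinement {N O : Type} (I : IFD N O) (P P' : Kind N O)
    (href : KRef P P') (π : List (Arc N O)) (hπ : PathIn I π)
    (hsat : KSat I π P) : KSat I π P' :=
  kind_refinement_general I P P' href π hsat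
end

section
/- If a requirement R' refines a requirement R (R' ⪯ R), then for every information flow diagram I, I ⊨ R' implies I ⊨ R. -/
set_option autoImplicit true

section IFCIL

variable {N O S A Pr : Type}

lemma matMono {I : IFD N O} {m m' : NodePat N} (h : NRef m m') {n : N}
    (hm : NodePat.mat I m n) : NodePat.mat I m' n := by
  rcases h with rfl | rfl
  · exact hm
  · trivial

lemma singleMono {I : IFD N O} {π : List (Arc N O)} {m m₂ m' m₂' : NodePat N}
    {o o' : Set O}
    (h : KSat I π (.atom m .single o m₂))
    (h1 : NRef m m') (h2 : NRef m₂ m₂') (ho : o ⊆ o') :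
    KSat I π (.atom m' .single o' m₂') := by
  cases h with
  | step ha hb hc =>
    exact .step (matMono h1 ha) (matMono h2 hb)
      (hc.mono (Set.inter_subset_inter_right _ ho))

lemma multiMonoAux {I : IFD N O} {π : List (Arc N O)} {K : Kind N O}
    (h : KSat I π K) :
    ∀ {m m₂ m' m₂' : NodePat N} {o o' : Set O}, K = .atom m .multi o m₂ →
      NRef m m' → NRef m₂ m₂' → o ⊆ o' →
      KSat I π (.atom m' .multi o' m₂') := by
  induction h with
  | step _ _ _ => intro _ _ _ _ _ _ hK; cases hK
  | plusBase hs => intro _ _ _ _ _ _ hK h1 h2 ho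
                   cases hK
                   exact .plusBase (singleMono hs h1 h2 ho)
  | plusStep hs _ _ ih =>
      intro _ _ _ _ _ _ hK h1 h2 ho
      cases hK
      exact .plusStep (singleMono hs h1 (Or.inl rfl) ho)
        (ih rfl (Or.inl rfl) h2 ho)
  | comp _ _ _ _ => intro _ _ _ _ _ _ hK; cases hK

lemma multiMono {I : IFD N O} {π : List (Arc N O)} {m m₂ m' m₂' : NodePat N}
    {o o' : Set O}
    (h : KSat I π (.atom m .multi o m₂))
    (h1 : NRef m m') (h2 : NRef m₂ m₂') (ho : o ⊆ o') :
    KSat I π (.atom m' .multi o' m₂') :=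
  multiMonoAux h rfl h1 h2 ho

lemma multiAppendAux {I : IFD N O} {π₁ : List (Arc N O)} {K : Kind N O}
    (h : KSat I π₁ K) :
    ∀ {m m₂ : NodePat N} {o : Set O} {π₂ : List (Arc N O)},
      K = .atom m .multi o .star →
      KSat I π₂ (.atom .star .multi o m₂) →
      KSat I (π₁ ++ π₂) (.atom m .multi o m₂) := by
  induction h with
  | step _ _ _ => intro _ _ _ _ hK; cases hK
  | plusBase hs => intro _ _ _ _ hK h2
                   cases hK
                   exact .plusStep hs h2
  | plusStep hs _ _ ih =>
      intro _ _ _ _ hK h2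
      cases hK
      exact .plusStep hs (ih rfl h2)
  | comp _ _ _ _ => intro _ _ _ _ hK; cases hK

lemma multiAppend {I : IFD N O} {π₁ π₂ : List (Arc N O)} {m m₂ : NodePat N}
    {o : Set O}
    (h1 : KSat I π₁ (.atom m .multi o .star))
    (h2 : KSat I π₂ (.atom .star .multi o m₂)) :
    KSat I (π₁ ++ π₂) (.atom m .multi o m₂) :=
  multiAppendAux h1 rfl h2

lemma multiSnocAux {I : IFD N O} {π : List (Arc N O)} {K : Kind N O}
    (h : KSat I π K) :
    ∀ {m m₂ : NodePat N} {o : Set O}, K = .atom m .multi o m₂ →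
      (∃ b, π = [b] ∧ KSat I [b] (.atom m .single o m₂)) ∨
      (∃ ρ b, π = ρ ++ [b] ∧ KSat I ρ (.atom m .multi o .star) ∧
        KSat I [b] (.atom .star .single o m₂)) := by
  induction h with
  | step _ _ _ => intro _ _ _ hK; cases hK
  | plusBase hs => intro _ _ _ hK; cases hK; exact Or.inl ⟨_, rfl, hs⟩
  | plusStep hs _ _ ih =>
      intro _ _ _ hK
      cases hK
      rcases ih rfl with ⟨b, rfl, hb⟩ | ⟨ρ, b, rfl, hρ, hb⟩
      · exact Or.inr ⟨_, b, rfl, .plusBase hs, hb⟩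
      · exact Or.inr ⟨_, b, rfl, .plusStep hs hρ, hb⟩
  | comp _ _ _ _ => intro _ _ _ hK; cases hK

lemma singleToMulti {I : IFD N O} {π : List (Arc N O)} {m m₂ : NodePat N}
    {o : Set O} (h : KSat I π (.atom m .single o m₂)) :
    KSat I π (.atom m .multi o m₂) := by
  cases h with
  | step a b c => exact .plusBase (.step a b c)

lemma kref_sound {I : IFD N O} {P Q : Kind N O} (h : KRef P Q) :
    ∀ π, KSat I π P → KSat I π Q := by
  induction h with
  | refl _ => exact fun _ h => h
  | trans _ _ ih1 ih2 => exact fun π h => ih2 _ (ih1 _ h)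
  | comp _ _ ih1 ih2 =>
      intro π h
      cases h with
      | comp h1 h2 => exact .comp (ih1 _ h1) (ih2 _ h2)
  | @atom n₁ n₁' n₂ n₂' w w' o o' h1 h2 hw ho =>
      intro π h
      cases hw with
      | up => exact singleToMulti (singleMono h h1 h2 ho)
      | refl =>
        cases w with
        | single => exact singleMono h h1 h2 ho
        | multi => exact multiMono h h1 h2 ho
  | p2 h1 h2 ho1 ho12 ho2 =>
      intro π h
      cases h with
      | comp ha hb =>
        cases ha with
        | plusBase hs =>
            exact .comp (singleMono hs h1 (Or.inl rfl) ho1)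
              (singleToMulti (singleMono hb (Or.inl rfl) h2 ho2))
        | plusStep hs hrest =>
            have hρ := multiAppend
              (multiMono hrest (Or.inl rfl) (Or.inl rfl) ho12)
              (singleToMulti (singleMono hb (Or.inl rfl) h2 ho2))
            exact KSat.comp (π₁ := [_]) (singleMono hs h1 (Or.inl rfl) ho1) hρ
  | p3 h1 h2 ho1 ho2 =>
      intro π h
      cases h with
      | comp ha hb =>
        exact multiAppend (multiMono ha h1 (Or.inl rfl) ho1)
          (multiMono hb (Or.inl rfl) h2 ho2)
  | p4 h1 h2 ho1 ho2 ho21 =>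
      intro π h
      cases h with
      | comp ha hb =>
        rcases multiSnocAux hb rfl with ⟨b, rfl, hbs⟩ | ⟨ρ, b, rfl, hρ, hbs⟩
        · exact .comp (singleToMulti (singleMono ha h1 (Or.inl rfl) ho1))
            (singleMono hbs (Or.inl rfl) h2 ho2)
        · have hfront : KSat I (_ ++ ρ) (.atom _ .multi _ .star) :=
            multiAppend (singleToMulti (singleMono ha h1 (Or.inl rfl) ho1))
              (multiMono hρ (Or.inl rfl) (Or.inl rfl) ho21)
          have := KSat.comp hfront (singleMono hbs (Or.inl rfl) h2 ho2)
          simpa [List.append_assoc] using this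

end IFCIL

/-- If a requirement `R'` refines a requirement `R` (`R' ⪯ R`),
then for every information flow diagram `I`, `I ⊨ R'` implies `I ⊨ R`. -/
theorem requirement_refinement {N O : Type} (R' R : Req N O)
    (href : RRef R' R) (I : IFD N O) (h : Valid I R') : Valid I R := by
  induction href with
  | refl _ => exact h
  | trans _ _ ih1 ih2 => exact ih2 (ih1 h)
  | ex hk =>
      obtain ⟨π, hπ, hs⟩ := h
      exact ⟨π, hπ, kref_sound hk _ hs⟩
  | no hk =>
      intro ⟨π, hπ, hs⟩
      exact h ⟨π, hπ, kref_sound hk _ hs⟩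
  | constr hk1 hk2 =>
      intro π hπ hs
      exact kref_sound hk2 _ (h π hπ (kref_sound hk1 _ hs))
end

section
/- Let π be a path in an information flow diagram I and K the KTS encoding of I. Then π ▷_I P if and only if there exists w ∈ enc(π) such that w ⊨_l enc(P), where enc(π) is the set of KTS paths obtained from π by choosing one operation from each arc's operation set, and enc(P) is the LTL encoding of the flow kind P. -/
set_option autoImplicit true

section Aux

variable {N O S A Pr : Type}

lemma encRest_length : ∀ {π : List (Arc N O)} {r : List (O × N)}, encRest π r →
    π.length = r.length := by
  intro π
  induction π with
  | nil =>
    intro r h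
    cases r with
    | nil => rfl
    | cons b r => exact absurd h (by simp [encRest])
  | cons a π ih =>
    intro r h
    obtain ⟨n, o, n'⟩ := a
    cases r with
    | nil => exact absurd h (by simp [encRest])
    | cons b r =>
      obtain ⟨op, s⟩ := b
      simp only [encRest] at h
      simp [ih h.2.2]

lemma drop_zero (w : FinPath S A) : w.drop 0 = w := by
  obtain ⟨f, rest⟩ := w
  cases rest <;> simp [FinPath.drop]

lemma fsat_untl (L : S → Set Pr) (φ ψ : LTL Pr A) (w : FinPath S A) :
    FSat L (.untl φ ψ) w ↔ FSat L ψ w ∨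
      ∃ a s r, w.rest = (a, s) :: r ∧ FSat L φ w ∧ FSat L (.untl φ ψ) ⟨s, r⟩ := by
  obtain ⟨f, rest⟩ := w
  constructor
  · rintro ⟨k, hk, hψ, hφ⟩
    cases k with
    | zero => exact Or.inl (by rw [drop_zero] at hψ; exact hψ)
    | succ k =>
      cases rest with
      | nil => simp at hk
      | cons b r =>
        obtain ⟨a, s⟩ := b
        refine Or.inr ⟨a, s, r, rfl, by have := hφ 0 (Nat.succ_pos _); rwa [drop_zero] at this,
          k, ?_, hψ, fun j hj => hφ (j + 1) (Nat.succ_lt_succ hj)⟩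
        simpa using hk
  · rintro (h | ⟨a, s, r, hrest, hφ, k, hk, hψ, hφ'⟩)
    · exact ⟨0, Nat.zero_le _, by rw [drop_zero]; exact h,
        fun j hj => absurd hj (Nat.not_lt_zero j)⟩
    · subst hrest
      refine ⟨k + 1, by simpa using Nat.succ_le_succ hk, hψ, fun j hj => ?_⟩
      cases j with
      | zero => exact hφ
      | succ j => exact hφ' j (Nat.lt_of_succ_lt_succ hj)

lemma lsat_ne_nil {I : IFD N O} {π : List (Arc N O)} {P : LKind N O}
    (h : LSat I π P) : π ≠ [] := by
  induction h <;> simp_all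

lemma encK_rest_ne {L : N → Set (NodePat N)} {P : LKind N O} {w : FinPath N O}
    (h : FSat L (encK P) w) : w.rest ≠ [] := by
  cases P <;>
    · obtain ⟨-, ⟨a, s, r, hr, -⟩, -⟩ := h
      simp [hr]

lemma lsat_forward {I : IFD N O} {π : List (Arc N O)} {P : LKind N O}
    (h : LSat I π P) (hch : Chained π) :
    ∃ w : FinPath N O, encPath π w ∧ FSat (labelOf I) (encK P) w := by
  induction h with
  | @step m n m' n' o o' hm hm' hoo =>
    obtain ⟨op, hop, hop'⟩ := hoo
    refine ⟨⟨n, [(op, n')]⟩, ⟨rfl, hop, rfl, trivial⟩,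
      hm, ⟨op, n', [], rfl, hop'⟩, ⟨op, n', [], rfl, hm', ?_⟩⟩
    rintro ⟨a, s, r, hr, -⟩
    cases hr
  | @plusBase n o n' m o' m' h ih =>
    obtain ⟨w, hw, h1, h2, a, s, r, hr, hm', hend⟩ := ih hch
    exact ⟨w, hw, h1, h2, a, s, r, hr,
      (fsat_untl _ _ _ _).mpr (Or.inl ⟨hm', hend⟩)⟩
  | @plusStep n o n' m o' π' m' h1 h2 ih1 ih2 =>
    cases h1 with
    | step hm _ hoo =>
      obtain ⟨op, hop, hop'⟩ := hoo
      rcases π' with _ | ⟨b, π''⟩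
      · exact absurd rfl (lsat_ne_nil h2)
      obtain ⟨hnb, hch'⟩ := hch
      obtain ⟨w', hw', hF'⟩ := ih2 hch'
      obtain ⟨f', rest'⟩ := w'
      obtain ⟨hf', hr'⟩ := hw'
      obtain ⟨-, hacts, a, s, r, hrr, huntl⟩ := hF'
      refine ⟨⟨n, (op, n') :: rest'⟩, ⟨rfl, hop, rfl, hr'⟩,
        hm, ⟨op, n', rest', rfl, hop'⟩, ⟨op, n', rest', rfl, ?_⟩⟩
      refine (fsat_untl _ _ _ _).mpr (Or.inr ⟨a, s, r, ?_, ?_, huntl⟩)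
      · simpa [and_assoc] using hrr
      · obtain ⟨a', s', r', hrr', ha'⟩ := hacts
        exact ⟨a', s', r', by simpa using hrr', ha'⟩
  | @stepC n o n' m o' π' P m' h1 h2 ih1 ih2 =>
    cases h1 with
    | step hm _ hoo =>
      obtain ⟨op, hop, hop'⟩ := hoo
      rcases π' with _ | ⟨b, π''⟩
      · exact absurd rfl (lsat_ne_nil h2)
      obtain ⟨hnb, hch'⟩ := hch
      obtain ⟨w', hw', hF'⟩ := ih2 hch'
      obtain ⟨f', rest'⟩ := w'
      obtain ⟨hf', hr'⟩ := hw'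
      have hfn : f' = n' := hf'.trans hnb.symm
      obtain rfl := hfn.symm
      exact ⟨⟨n, (op, n') :: rest'⟩, ⟨rfl, hop, rfl, hr'⟩,
        hm, ⟨op, n', rest', rfl, hop'⟩, ⟨op, n', rest', rfl, hF'⟩⟩
  | @plusCBase π' m o' m' P h ih =>
    obtain ⟨w, hw, h1, h2, a, s, r, hr, hP⟩ := ih hch
    exact ⟨w, hw, h1, h2, a, s, r, hr,
      (fsat_untl _ _ _ _).mpr (Or.inl hP)⟩
  | @plusCStep n o n' m o' π' P m' h1 h2 ih1 ih2 =>
    cases h1 with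
    | step hm _ hoo =>
      obtain ⟨op, hop, hop'⟩ := hoo
      rcases π' with _ | ⟨b, π''⟩
      · exact absurd rfl (lsat_ne_nil h2)
      obtain ⟨hnb, hch'⟩ := hch
      obtain ⟨w', hw', hF'⟩ := ih2 hch'
      obtain ⟨f', rest'⟩ := w'
      obtain ⟨hf', hr'⟩ := hw'
      obtain ⟨-, hacts, a, s, r, hrr, huntl⟩ := hF'
      refine ⟨⟨n, (op, n') :: rest'⟩, ⟨rfl, hop, rfl, hr'⟩,
        hm, ⟨op, n', rest', rfl, hop'⟩, ⟨op, n', rest', rfl, ?_⟩⟩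
      refine (fsat_untl _ _ _ _).mpr (Or.inr ⟨a, s, r, ?_, ?_, huntl⟩)
      · simpa [and_assoc] using hrr
      · obtain ⟨a', s', r', hrr', ha'⟩ := hacts
        exact ⟨a', s', r', by simpa using hrr', ha'⟩

lemma lsat_backward {I : IFD N O} : ∀ (π : List (Arc N O)) (P : LKind N O)
    (w : FinPath N O), Chained π → encPath π w →
    FSat (labelOf I) (encK P) w → LSat I π P := by
  intro π
  induction π with
  | nil => intro P w _ he; exact absurd he (by simp [encPath])
  | cons a π ih =>
    obtain ⟨n, o, n'⟩ := a
    intro P w hch he hF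
    obtain ⟨f, rest⟩ := w
    obtain ⟨hf, hr⟩ := he
    subst hf
    cases rest with
    | nil => exact absurd hr (by simp [encRest])
    | cons b r =>
      obtain ⟨op, s⟩ := b
      obtain ⟨hop, hs, hr'⟩ := hr
      obtain rfl := hs.symm
      cases P with
      | step m o' m' =>
        obtain ⟨h1, h2, a', s', r', hrr, hm', hend⟩ := hF
        obtain ⟨rfl, rfl, rfl⟩ : op = a' ∧ n' = s' ∧ r = r' := by
          simpa [and_assoc] using hrr
        have hrnil : r = [] := by
          cases r with
          | nil => rfl
          | cons c r'' =>
            obtain ⟨a3, s3⟩ := c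
            exact absurd ⟨a3, s3, r'', rfl, trivial⟩ hend
        subst hrnil
        have hπnil : π = [] := by
          have := encRest_length hr'
          simpa using this
        subst hπnil
        obtain ⟨a3, s3, r3, hrr3, ha3⟩ := h2
        obtain ⟨rfl, -, -⟩ : op = a3 ∧ n' = s3 ∧ ([] : List (O × N)) = r3 := by
          simpa [and_assoc] using hrr3
        exact LSat.step h1 hm' ⟨op, hop, ha3⟩
      | plus m o' m' =>
        obtain ⟨h1, h2, a', s', r', hrr, huntl⟩ := hF
        obtain ⟨rfl, rfl, rfl⟩ : op = a' ∧ n' = s' ∧ r = r' := by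
          simpa [and_assoc] using hrr
        obtain ⟨a3, s3, r3, hrr3, ha3⟩ := h2
        obtain ⟨rfl, -, -⟩ : op = a3 ∧ n' = s3 ∧ r = r3 := by
          simpa [and_assoc] using hrr3
        rcases (fsat_untl _ _ _ _).mp huntl with ⟨hm', hend⟩ |
            ⟨a4, s4, r4, hrr4, hacts4, huntl4⟩
        · have hrnil : r = [] := by
            cases r with
            | nil => rfl
            | cons c r'' =>
              obtain ⟨a5, s5⟩ := c
              exact absurd ⟨a5, s5, r'', rfl, trivial⟩ hend
          subst hrnil
          have hπnil : π = [] := by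
            have := encRest_length hr'
            simpa using this
          subst hπnil
          exact LSat.plusBase (LSat.step h1 hm' ⟨op, hop, ha3⟩)
        · rcases π with _ | ⟨c, π'⟩
          · have hlen := encRest_length hr'
            have hr4 : r = (a4, s4) :: r4 := hrr4
            rw [hr4] at hlen
            simp at hlen
          obtain ⟨hnc, hch'⟩ := hch
          have hsat : LSat I (c :: π') (LKind.plus .star o' m') := by
            refine ih (LKind.plus .star o' m') ⟨n', r⟩ hch' ⟨hnc, hr'⟩
              ⟨trivial, ?_, ?_⟩
            · obtain ⟨a6, s6, r6, hrr6, ha6⟩ := hacts4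
              exact ⟨a6, s6, r6, by simpa using hrr6, ha6⟩
            · exact ⟨a4, s4, r4, by simpa using hrr4, huntl4⟩
          exact LSat.plusStep (LSat.step h1 trivial ⟨op, hop, ha3⟩) hsat
      | stepC m o' m' P =>
        obtain ⟨h1, h2, a', s', r', hrr, hP⟩ := hF
        obtain ⟨rfl, rfl, rfl⟩ : op = a' ∧ n' = s' ∧ r = r' := by
          simpa [and_assoc] using hrr
        obtain ⟨a3, s3, r3, hrr3, ha3⟩ := h2
        obtain ⟨rfl, -, -⟩ : op = a3 ∧ n' = s3 ∧ r = r3 := by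
          simpa [and_assoc] using hrr3
        rcases π with _ | ⟨c, π'⟩
        · have hrne := encK_rest_ne hP
          have := encRest_length hr'
          cases r with
          | nil => exact absurd rfl hrne
          | cons d r'' => simp at this
        obtain ⟨hnc, hch'⟩ := hch
        have hsat : LSat I (c :: π') P :=
          ih P ⟨n', r⟩ hch' ⟨hnc, hr'⟩ hP
        exact LSat.stepC (LSat.step h1 trivial ⟨op, hop, ha3⟩) hsat
      | plusC m o' m' P =>
        obtain ⟨h1, h2, a', s', r', hrr, huntl⟩ := hF
        obtain ⟨rfl, rfl, rfl⟩ : op = a' ∧ n' = s' ∧ r = r' := by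
          simpa [and_assoc] using hrr
        obtain ⟨a3, s3, r3, hrr3, ha3⟩ := h2
        obtain ⟨rfl, -, -⟩ : op = a3 ∧ n' = s3 ∧ r = r3 := by
          simpa [and_assoc] using hrr3
        rcases π with _ | ⟨c, π'⟩
        · cases r with
          | nil =>
            rcases (fsat_untl _ _ _ _).mp huntl with hP |
                ⟨a4, s4, r4, hrr4, -, -⟩
            · exact absurd rfl (encK_rest_ne hP)
            · simp at hrr4
          | cons d r'' =>
            have := encRest_length hr'
            simp at this
        obtain ⟨hnc, hch'⟩ := hch
        rcases (fsat_untl _ _ _ _).mp huntl with hP |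
            ⟨a4, s4, r4, hrr4, hacts4, huntl4⟩
        · have hsat : LSat I (c :: π') P :=
            ih P ⟨n', r⟩ hch' ⟨hnc, hr'⟩ hP
          exact LSat.plusCBase (LSat.stepC (LSat.step h1 trivial ⟨op, hop, ha3⟩) hsat)
        · have hsat : LSat I (c :: π') (LKind.plusC .star o' .star P) := by
            refine ih (LKind.plusC .star o' .star P) ⟨n', r⟩ hch' ⟨hnc, hr'⟩
              ⟨trivial, ?_, ?_⟩
            · obtain ⟨a6, s6, r6, hrr6, ha6⟩ := hacts4
              exact ⟨a6, s6, r6, by simpa using hrr6, ha6⟩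
            · exact ⟨a4, s4, r4, by simpa using hrr4, huntl4⟩
          exact LSat.plusCStep (LSat.step h1 trivial ⟨op, hop, ha3⟩) hsat

end Aux

/-- Let `π` be a path in an information flow diagram `I` with
`K` its KTS. Then `π ▷_I P` iff there exists `w ∈ enc(π)` such that
`w ⊨_l enc(P)`. -/
theorem diagram_path_encoding {N O : Type} (I : IFD N O)
    (π : List (Arc N O)) (hπ : PathIn I π) (P : LKind N O) :
    LSat I π P ↔ ∃ w : FinPath N O, encPath π w ∧ FSat (labelOf I) (encK P) w := by
  constructor
  · exact fun h => lsat_forward h hπ.2.1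
  · rintro ⟨w, hw, hF⟩
    exact lsat_backward π P w hπ.2.1 hw hF
end

section
/- If a finite KTS path w satisfies enc(P), then the infinite path w·ι^ω in the sink-extended KTS K_ι satisfies enc_ι(P), where enc_ι is the encoding in which the end-of-path formula ¬X(true) is replaced by X(ι). -/
set_option autoImplicit true

section IFCIL

variable {N O S A Pr : Type}

section AuxFinToSink

variable {N O : Type}

lemma appendSink_state (w : FinPath N O) (ops : ℕ → O) (i : ℕ) :
    (appendSink w ops).state i = w.states[i]? := rfl

lemma aux_kts_step (I : IFD N O) :
    ∀ (r : List (O × N)) (s : N) (_ : ktsRest I s r) (i : ℕ) (a : O),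
      sinkStep I ((s :: r.map Prod.snd)[i]?)
        (if h : i < r.length then (r.get ⟨i, h⟩).1 else a)
        ((s :: r.map Prod.snd)[i+1]?) := by
  intro r
  induction r with
  | nil =>
    intro s _ i a
    simp only [List.map_nil, List.length_nil]
    have h1 : ([s] : List N)[i+1]? = none := by
      rw [List.getElem?_eq_none]; simp
    rw [h1]
    rcases ([s] : List N)[i]? with _ | x <;> simp [sinkStep]
  | cons p t ih =>
    intro s hr i a
    obtain ⟨op, s'⟩ := p
    cases i with
    | zero =>
      simpa [sinkStep] using hr.1
    | succ j =>
      have key := ih s' hr.2 j a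
      have hd : (if h : j + 1 < ((op, s') :: t).length
            then (((op, s') :: t).get ⟨j + 1, h⟩).1 else a)
          = (if h : j < t.length then (t.get ⟨j, h⟩).1 else a) := by
        by_cases h : j < t.length
        · rw [dif_pos (by simpa using Nat.succ_lt_succ h), dif_pos h]
          simp
        · rw [dif_neg (by simpa using fun hh => h (Nat.lt_of_succ_lt_succ hh)), dif_neg h]
      rw [hd]
      simpa using key

lemma appendSink_path (I : IFD N O) (w : FinPath N O) (hw : KTSPath I w)
    (ops : ℕ → O) : KιPath I (appendSink w ops) := by
  intro i
  exact aux_kts_step I w.rest w.first hw i (ops i)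

lemma appendSink_drop1 (w : FinPath N O) (ops : ℕ → O) (a : O) (s : N)
    (r : List (O × N)) (hr : w.rest = (a, s) :: r) :
    (appendSink w ops).drop 1 = appendSink ⟨s, r⟩ (fun i => ops (i + 1)) := by
  obtain ⟨f, rest⟩ := w
  simp only at hr
  subst hr
  refine congrArg₂ InfPath.mk (funext fun i => ?_) (funext fun i => ?_)
  · show (f :: ((a, s) :: r).map Prod.snd)[i+1]? = (s :: r.map Prod.snd)[i]?
    simp
  · show (appendSink ⟨f, (a, s) :: r⟩ ops).act (i + 1) = _
    simp only [appendSink]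
    by_cases h : i < r.length
    · rw [dif_pos (by simpa using Nat.succ_lt_succ h), dif_pos h]
      rfl
    · rw [dif_neg (by simpa using fun hh => h (Nat.lt_of_succ_lt_succ hh)), dif_neg h]

lemma appendSink_drop (k : ℕ) : ∀ (w : FinPath N O) (ops : ℕ → O),
    k ≤ w.rest.length →
    (appendSink w ops).drop k = appendSink (w.drop k) (fun i => ops (i + k)) := by
  induction k with
  | zero =>
    intro w ops _
    have h0 : w.drop 0 = w := by simp [FinPath.drop]
    rw [h0]
    rfl
  | succ j ih =>
    intro w ops hk
    obtain ⟨f, rest⟩ := w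
    cases rest with
    | nil => simp at hk
    | cons p t =>
      obtain ⟨a, s⟩ := p
      have h1 : (appendSink ⟨f, (a, s) :: t⟩ ops).drop (j + 1)
          = ((appendSink ⟨f, (a, s) :: t⟩ ops).drop 1).drop j := rfl
      rw [h1, appendSink_drop1 _ ops a s t rfl,
        ih ⟨s, t⟩ _ (Nat.succ_le_succ_iff.mp (by simpa using hk))]
      rfl

lemma atom_trans (I : IFD N O) (w : FinPath N O) (ops : ℕ → O) (m : NodePat N)
    (h : NodePat.mat I m w.first) :
    ISat (labelι I) (.atom (.inl m)) (appendSink w ops) := by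
  show Sum.inl m ∈ labelι I ((appendSink w ops).state 0)
  have h0 : (appendSink w ops).state 0 = some w.first := by
    rw [appendSink_state]; simp [FinPath.states]
  rw [h0]
  exact ⟨m, rfl, h⟩

lemma acts_trans (I : IFD N O) (w : FinPath N O) (ops : ℕ → O) (o : Set O)
    (h : ∃ a s r, w.rest = (a, s) :: r ∧ a ∈ o) :
    ISat (labelι I) (.acts o) (appendSink w ops) := by
  obtain ⟨f, rest⟩ := w
  obtain ⟨a, s, r, hr, ha⟩ := h
  simp only at hr
  subst hr
  show (appendSink ⟨f, (a, s) :: r⟩ ops).act 0 ∈ o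
  simp only [appendSink]
  rw [dif_pos (by simp)]
  simpa using ha

lemma end_trans (I : IFD N O) (w : FinPath N O) (ops : ℕ → O)
    (h : w.rest = []) :
    ISat (labelι I) (.next (.atom (.inr ()))) (appendSink w ops) := by
  show Sum.inr () ∈ labelι I (((appendSink w ops).drop 1).state 0)
  have h1 : ((appendSink w ops).drop 1).state 0 = w.states[1]? := rfl
  have h2 : w.states[1]? = none := by
    rw [List.getElem?_eq_none]
    simp [FinPath.states, h]
  rw [h1, h2]
  exact rfl

lemma rest_nil_of_endmark {L : N → Set (NodePat N)} {w : FinPath N O}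
    (h : FSat L (.not (.next .tt)) w) : w.rest = [] := by
  cases hr : w.rest with
  | nil => rfl
  | cons p t =>
    exact absurd ⟨p.1, p.2, t, by rw [hr], trivial⟩ h

lemma enc_main (I : IFD N O) : ∀ (P : LKind N O) (w : FinPath N O) (ops : ℕ → O),
    FSat (labelOf I) (encK P) w → ISat (labelι I) (encι P) (appendSink w ops) := by
  intro P
  induction P with
  | step n o n' =>
    intro w ops h
    obtain ⟨h1, h2, h3⟩ := h
    obtain ⟨a, s, r, hr, hs⟩ := h3
    have hrn : r = [] := rest_nil_of_endmark hs.2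
    subst hrn
    refine ⟨atom_trans I w ops n h1, acts_trans I w ops o h2, ?_⟩
    show ISat (labelι I) _ ((appendSink w ops).drop 1)
    rw [appendSink_drop1 w ops a s [] hr]
    exact ⟨atom_trans I ⟨s, []⟩ _ n' hs.1, end_trans I ⟨s, []⟩ _ rfl⟩
  | plus n o n' =>
    intro w ops h
    obtain ⟨h1, h2, h3⟩ := h
    obtain ⟨a, s, r, hr, hu⟩ := h3
    refine ⟨atom_trans I w ops n h1, acts_trans I w ops o h2, ?_⟩
    show ISat (labelι I) _ ((appendSink w ops).drop 1)
    rw [appendSink_drop1 w ops a s r hr]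
    obtain ⟨k, hk, hψ, hφ⟩ := hu
    refine ⟨k, ?_, ?_⟩
    · rw [appendSink_drop k ⟨s, r⟩ _ hk]
      exact ⟨atom_trans I _ _ n' hψ.1, end_trans I _ _ (rest_nil_of_endmark hψ.2)⟩
    · intro j hj
      rw [appendSink_drop j ⟨s, r⟩ _ (le_of_lt (lt_of_lt_of_le hj hk))]
      exact acts_trans I _ _ o (hφ j hj)
  | stepC n o n' P ih =>
    intro w ops h
    obtain ⟨h1, h2, h3⟩ := h
    obtain ⟨a, s, r, hr, hP⟩ := h3
    refine ⟨atom_trans I w ops n h1, acts_trans I w ops o h2, ?_⟩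
    show ISat (labelι I) _ ((appendSink w ops).drop 1)
    rw [appendSink_drop1 w ops a s r hr]
    exact ih ⟨s, r⟩ _ hP
  | plusC n o n' P ih =>
    intro w ops h
    obtain ⟨h1, h2, h3⟩ := h
    obtain ⟨a, s, r, hr, hu⟩ := h3
    refine ⟨atom_trans I w ops n h1, acts_trans I w ops o h2, ?_⟩
    show ISat (labelι I) _ ((appendSink w ops).drop 1)
    rw [appendSink_drop1 w ops a s r hr]
    obtain ⟨k, hk, hψ, hφ⟩ := hu
    refine ⟨k, ?_, ?_⟩
    · rw [appendSink_drop k ⟨s, r⟩ _ hk]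
      exact ih _ _ hψ
    · intro j hj
      rw [appendSink_drop j ⟨s, r⟩ _ (le_of_lt (lt_of_lt_of_le hj hk))]
      exact acts_trans I _ _ o (hφ j hj)

end AuxFinToSink

end IFCIL

/-- If a finite KTS path `w` satisfies `enc(P)`, then the
infinite path `w·ι^ω` in the sink-extended KTS `K_ι` satisfies `enc_ι(P)`
(for any choice of operation labels into `ι`), and `w·ι^ω` is a path of `K_ι`. -/
theorem fin_to_sink {N O : Type} (I : IFD N O) (w : FinPath N O)
    (hw : KTSPath I w) (P : LKind N O)
    (h : FSat (labelOf I) (encK P) w) (ops : ℕ → O) :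
    KιPath I (appendSink w ops) ∧ ISat (labelι I) (encι P) (appendSink w ops) :=
  ⟨appendSink_path I w hw ops, enc_main I P w ops h⟩
end
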